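/- arXiv:2601.20431 — 3 statements merged into one kernel-verified Lean document; each statement's English description precedes it below -/
import Mathlib

section
/- Let z = a+ib and w = c+id be points of the open unit disk both lying in the open right half-plane (a > 0 and c > 0) or both in the open left half-plane (a < 0 and c < 0). Then [z, w] < [z, -conj(w)], where -conj(w) is the reflection of w across the imaginary axis. -/
/-!
Writing `P = (1 - |z|²)(1 - |w|²)`, the identity `|1 - z̄w|² - |z - w|² = P` gives
`[z, w]² = 1 - P / |1 - z̄w|²`. The reflection `w ↦ -w̄` preserves `|w|`, hence `P`, and
increases `|1 - z̄w|²` by `4 Re z Re w`, which is positive when `z` and `w` lie in the same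
half-plane.
-/

open Complex

noncomputable def pd (z w : ℂ) : ℝ := ‖(z - w) / (1 - (starRingEnd ℂ) z * w)‖

open ComplexConjugate

theorem Complex.normSq_one_sub_conj_mul_sub_normSq_sub (z w : ℂ) :
    normSq (1 - conj z * w) - normSq (z - w) = (1 - normSq z) * (1 - normSq w) := by
  simp only [normSq_apply, sub_re, sub_im, mul_re, mul_im, one_re, one_im, conj_re, conj_im]
  ring

theorem Complex.normSq_one_sub_conj_mul_neg_conj (z w : ℂ) :
    normSq (1 - conj z * -conj w) = normSq (1 - conj z * w) + 4 * z.re * w.re := by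
  simp only [normSq_apply, sub_re, sub_im, mul_re, mul_im, neg_re, neg_im, one_re, one_im,
    conj_re, conj_im]
  ring

section UnitDisc

variable {z w w' : ℂ}

theorem one_sub_normSq_pos (hz : ‖z‖ < 1) : 0 < 1 - normSq z := by
  rw [normSq_eq_norm_sq, sub_pos]
  exact pow_lt_one₀ (norm_nonneg z) hz two_ne_zero

theorem normSq_one_sub_conj_mul_pos (hz : ‖z‖ < 1) (hw : ‖w‖ < 1) :
    0 < normSq (1 - conj z * w) := by
  have hP := mul_pos (one_sub_normSq_pos hz) (one_sub_normSq_pos hw)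
  rw [← normSq_one_sub_conj_mul_sub_normSq_sub] at hP
  linarith [normSq_nonneg (z - w)]

theorem pd_sq (hz : ‖z‖ < 1) (hw : ‖w‖ < 1) :
    pd z w ^ 2 = 1 - (1 - normSq z) * (1 - normSq w) / normSq (1 - conj z * w) := by
  rw [pd, norm_div, div_pow, ← normSq_eq_norm_sq, ← normSq_eq_norm_sq, eq_sub_iff_add_eq,
    ← add_div, ← normSq_one_sub_conj_mul_sub_normSq_sub, add_sub_cancel,
    div_self (normSq_one_sub_conj_mul_pos hz hw).ne']

theorem pd_lt_pd_of_norm_eq_of_normSq_lt (hz : ‖z‖ < 1) (hw : ‖w‖ < 1) (hw' : ‖w'‖ = ‖w‖)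
    (h : normSq (1 - conj z * w) < normSq (1 - conj z * w')) : pd z w < pd z w' := by
  have hw'1 : ‖w'‖ < 1 := hw' ▸ hw
  refine lt_of_pow_lt_pow_left₀ 2 (norm_nonneg _) ?_
  rw [pd_sq hz hw, pd_sq hz hw'1, normSq_eq_norm_sq w', hw', ← normSq_eq_norm_sq]
  have hP := mul_pos (one_sub_normSq_pos hz) (one_sub_normSq_pos hw)
  exact sub_lt_sub_left (div_lt_div_of_pos_left hP (normSq_one_sub_conj_mul_pos hz hw) h) 1

end UnitDisc

theorem pd_lt_pd_reflection (z w : ℂ) (hz : ‖z‖ < 1) (hw : ‖w‖ < 1)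
    (hside : (0 < z.re ∧ 0 < w.re) ∨ (z.re < 0 ∧ w.re < 0)) :
    pd z w < pd z (-(starRingEnd ℂ) w) := by
  have hre : 0 < z.re * w.re := by
    rcases hside with ⟨hz₀, hw₀⟩ | ⟨hz₀, hw₀⟩
    · exact mul_pos hz₀ hw₀
    · exact mul_pos_of_neg_of_neg hz₀ hw₀
  refine pd_lt_pd_of_norm_eq_of_normSq_lt hz hw (by rw [norm_neg, norm_conj]) ?_
  rw [normSq_one_sub_conj_mul_neg_conj]
  linarith
end

section
/- For every z in the open unit disk, (1/π)·∫_D (log(1/[z,w]))² · (1-|w|²)⁻² dA(w) = π²/12, where [z,w] = |z-w|/|1-conj(z)w|. In particular this integral is finite and independent of z. -/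
open Complex MeasureTheory

open Set Filter Topology Real Metric ComplexConjugate

/-!
The integrand depends on `w` only through `[z, w] = ‖φ_z w‖`, where
`φ_z w = (z - w) / (1 - z̄ w)` is the involutive automorphism of the disk exchanging `0` and `z`.
By the Schwarz–Pick equality `|φ_z'(w)| = (1 - |φ_z w|²) / (1 - |w|²)`, the hyperbolic area
measure `(1 - |w|²)⁻² dA` is `φ_z`-invariant, so the integral equals its value at `z = 0`.
In polar coordinates that is `2π ∫₀¹ r (log r)² / (1 - r²)² dr`; expanding
`(1 - r²)⁻² = ∑ (n + 1) r^{2n}` and using `∫₀¹ r^{2n+1} (log r)² dr = 1 / (4 (n + 1)³)`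
gives `2π · ζ(2) / 4 = π³ / 12`.
-/

noncomputable def diskInvolution (z w : ℂ) : ℂ := (z - w) / (1 - conj z * w)

lemma pd_eq_norm_diskInvolution (z w : ℂ) : pd z w = ‖diskInvolution z w‖ := rfl

lemma norm_one_sub_conj_mul_sq_sub_norm_sub_sq (z w : ℂ) :
    ‖1 - conj z * w‖ ^ 2 - ‖z - w‖ ^ 2 = (1 - ‖z‖ ^ 2) * (1 - ‖w‖ ^ 2) := by
  simp only [Complex.sq_norm, normSq_apply, sub_re, sub_im, mul_re, mul_im, one_re, one_im,
    conj_re, conj_im]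
  ring

lemma one_sub_sq_norm_pos {E : Type*} [SeminormedAddGroup E] {x : E} (hx : ‖x‖ < 1) :
    0 < 1 - ‖x‖ ^ 2 :=
  sub_pos.mpr (pow_lt_one₀ (norm_nonneg x) hx two_ne_zero)

section DiskInvolution

variable {z w : ℂ}

lemma one_sub_conj_mul_ne_zero (hz : ‖z‖ < 1) (hw : ‖w‖ ≤ 1) : 1 - conj z * w ≠ 0 := by
  have : ‖conj z * w‖ < 1 := by
    rw [norm_mul, norm_conj]
    nlinarith [norm_nonneg z, norm_nonneg w]
  exact sub_ne_zero.mpr fun h => by simp [← h] at this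

lemma one_sub_norm_diskInvolution_sq (h : 1 - conj z * w ≠ 0) :
    1 - ‖diskInvolution z w‖ ^ 2 = (1 - ‖z‖ ^ 2) * (1 - ‖w‖ ^ 2) / ‖1 - conj z * w‖ ^ 2 := by
  rw [diskInvolution, norm_div, div_pow, ← norm_one_sub_conj_mul_sq_sub_norm_sub_sq, sub_div,
    div_self (by positivity)]

lemma norm_diskInvolution_lt_one (hz : ‖z‖ < 1) (hw : ‖w‖ < 1) :
    ‖diskInvolution z w‖ < 1 := by
  have h := one_sub_norm_diskInvolution_sq (one_sub_conj_mul_ne_zero hz hw.le)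
  have : 0 < 1 - ‖diskInvolution z w‖ ^ 2 := by
    rw [h]
    exact div_pos (mul_pos (one_sub_sq_norm_pos hz) (one_sub_sq_norm_pos hw))
      (pow_pos (norm_pos_iff.mpr (one_sub_conj_mul_ne_zero hz hw.le)) 2)
  nlinarith [norm_nonneg (diskInvolution z w)]

lemma diskInvolution_diskInvolution (hz : ‖z‖ < 1) (hw : ‖w‖ ≤ 1) :
    diskInvolution z (diskInvolution z w) = w := by
  have h := one_sub_conj_mul_ne_zero hz hw
  have hz' : 1 - conj z * z ≠ 0 := one_sub_conj_mul_ne_zero hz hz.le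
  have hnum : z - diskInvolution z w = w * (1 - conj z * z) / (1 - conj z * w) := by
    rw [diskInvolution, eq_div_iff h, sub_mul, div_mul_cancel₀ _ h]
    ring
  have hden : 1 - conj z * diskInvolution z w = (1 - conj z * z) / (1 - conj z * w) := by
    rw [diskInvolution, eq_div_iff h, sub_mul, mul_div_assoc', div_mul_cancel₀ _ h]
    ring
  change (z - diskInvolution z w) / (1 - conj z * diskInvolution z w) = w
  rw [hnum, hden, div_div_div_cancel_right₀ h, mul_div_cancel_right₀ _ hz']

lemma hasDerivAt_diskInvolution (h : 1 - conj z * w ≠ 0) :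
    HasDerivAt (diskInvolution z) ((conj z * z - 1) / (1 - conj z * w) ^ 2) w := by
  refine (((hasDerivAt_id w).const_sub z).div
    (((hasDerivAt_id w).const_mul (conj z)).const_sub 1) h).congr_deriv ?_
  simp only [id]
  ring

lemma norm_deriv_diskInvolution_sq (hz : ‖z‖ < 1) (hw : ‖w‖ < 1) :
    ‖(conj z * z - 1) / (1 - conj z * w) ^ 2‖ ^ 2 =
      ((1 - ‖diskInvolution z w‖ ^ 2) / (1 - ‖w‖ ^ 2)) ^ 2 := by
  have hzz : ‖conj z * z - 1‖ = 1 - ‖z‖ ^ 2 := by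
    rw [mul_comm, mul_conj, ← Complex.sq_norm, ← norm_neg, neg_sub]
    exact_mod_cast Complex.norm_of_nonneg (one_sub_sq_norm_pos hz).le
  rw [one_sub_norm_diskInvolution_sq (one_sub_conj_mul_ne_zero hz hw.le), norm_div, norm_pow,
    hzz]
  field_simp [(one_sub_sq_norm_pos hw).ne']

lemma bijOn_diskInvolution (hz : ‖z‖ < 1) : BijOn (diskInvolution z) (ball 0 1) (ball 0 1) := by
  have hmaps : MapsTo (diskInvolution z) (ball 0 1) (ball 0 1) := fun w hw => by
    rw [mem_ball_zero_iff] at hw ⊢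
    exact norm_diskInvolution_lt_one hz hw
  have hinv : LeftInvOn (diskInvolution z) (diskInvolution z) (ball 0 1) := fun w hw =>
    diskInvolution_diskInvolution hz (mem_ball_zero_iff.mp hw).le
  exact InvOn.bijOn ⟨hinv, hinv⟩ hmaps hmaps

end DiskInvolution

lemma integral_image_eq_integral_norm_deriv_sq_smul {E : Type*} [NormedAddCommGroup E]
    [NormedSpace ℝ E] {s : Set ℂ} {f f' : ℂ → ℂ} (hs : MeasurableSet s)
    (hf : ∀ x ∈ s, HasDerivWithinAt f (f' x) s x) (hinj : InjOn f s) (g : ℂ → E) :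
    ∫ x in f '' s, g x = ∫ x in s, ‖f' x‖ ^ 2 • g (f x) := by
  rw [integral_image_eq_integral_abs_det_fderiv_smul volume hs
    (fun x hx => (hf x hx).hasFDerivWithinAt.restrictScalars ℝ) hinj]
  congr with x
  simp [ContinuousLinearMap.det, LinearMap.det_restrictScalars, Algebra.norm_complex_eq,
    Complex.normSq_eq_norm_sq]

lemma setIntegral_ball_comp_diskInvolution_mul {z : ℂ} (hz : ‖z‖ < 1) (g : ℂ → ℝ) :
    ∫ w in ball 0 1, g (diskInvolution z w) * (1 - ‖w‖ ^ 2)⁻¹ ^ 2 =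
      ∫ w in ball 0 1, g w * (1 - ‖w‖ ^ 2)⁻¹ ^ 2 := by
  have hbij := bijOn_diskInvolution hz
  calc ∫ w in ball 0 1, g (diskInvolution z w) * (1 - ‖w‖ ^ 2)⁻¹ ^ 2
      = ∫ w in diskInvolution z '' ball 0 1, g (diskInvolution z w) * (1 - ‖w‖ ^ 2)⁻¹ ^ 2 := by
        rw [hbij.image_eq]
    _ = ∫ w in ball 0 1, ‖(conj z * z - 1) / (1 - conj z * w) ^ 2‖ ^ 2 •
          (g (diskInvolution z (diskInvolution z w)) * (1 - ‖diskInvolution z w‖ ^ 2)⁻¹ ^ 2) :=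
        integral_image_eq_integral_norm_deriv_sq_smul measurableSet_ball
          (fun w hw => (hasDerivAt_diskInvolution (one_sub_conj_mul_ne_zero hz
            (mem_ball_zero_iff.mp hw).le)).hasDerivWithinAt) hbij.injOn _
    _ = ∫ w in ball 0 1, g w * (1 - ‖w‖ ^ 2)⁻¹ ^ 2 := by
        refine setIntegral_congr_fun measurableSet_ball fun w hw => ?_
        have hw := mem_ball_zero_iff.mp hw
        rw [smul_eq_mul, norm_deriv_diskInvolution_sq hz hw,
          diskInvolution_diskInvolution hz hw.le]
        have := (one_sub_sq_norm_pos (norm_diskInvolution_lt_one hz hw)).ne'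
        have := (one_sub_sq_norm_pos hw).ne'
        field_simp

lemma setIntegral_ball_zero_comp_norm {E : Type*} [NormedAddCommGroup E] [NormedSpace ℝ E]
    (f : ℝ → E) (R : ℝ) :
    ∫ w in ball (0 : ℂ) R, f ‖w‖ = (2 * π) • ∫ r in Ioo 0 R, r • f r := by
  have hball : ball (0 : ℂ) R = (‖·‖) ⁻¹' Iio R := by ext; simp
  rw [hball, ← integral_indicator (measurableSet_Iio.preimage continuous_norm.measurable)]
  simp_rw [← Function.comp_apply (f := f) (g := (‖·‖)), indicator_comp_right]
  rw [integral_fun_norm_addHaar, Complex.finrank_real_complex, Nat.add_one_sub_one]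
  simp_rw [pow_one, ← indicator_smul_apply (Iio R) (fun y : ℝ => y) f]
  rw [setIntegral_indicator measurableSet_Iio, Ioi_inter_Iio,
    measureReal_def, Complex.volume_ball, ← Nat.cast_smul_eq_nsmul ℝ, smul_smul]
  norm_num

lemma tendsto_pow_mul_log_pow_nhdsGT_zero {m : ℕ} (hm : m ≠ 0) (j : ℕ) :
    Tendsto (fun x : ℝ => x ^ m * Real.log x ^ j) (𝓝[>] 0) (𝓝 0) := by
  rcases Nat.eq_zero_or_pos j with rfl | hj
  · simpa [hm] using ((continuous_pow m).tendsto' 0 0 (zero_pow hm)).mono_left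
      nhdsWithin_le_nhds
  · have h := (tendsto_log_mul_rpow_nhdsGT_zero (by positivity : (0 : ℝ) < m / j)).pow j
    rw [zero_pow hj.ne'] at h
    refine h.congr' ?_
    filter_upwards [self_mem_nhdsWithin] with x (hx : 0 < x)
    rw [mul_pow, ← rpow_natCast (x ^ _), ← rpow_mul hx.le,
      div_mul_cancel₀ _ (by exact_mod_cast hj.ne'), rpow_natCast, mul_comm]

lemma continuousOn_pow_mul_log_pow {m : ℕ} (hm : m ≠ 0) (j : ℕ) :
    ContinuousOn (fun x : ℝ => x ^ m * Real.log x ^ j) (Ici 0) := by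
  intro x (hx : 0 ≤ x)
  rcases hx.eq_or_lt with rfl | hx
  · rw [← continuousWithinAt_Ioi_iff_Ici, ContinuousWithinAt]
    simpa [hm] using tendsto_pow_mul_log_pow_nhdsGT_zero hm j
  · exact ((continuous_pow m).continuousAt.mul
      ((continuousAt_log hx.ne').pow j)).continuousWithinAt

lemma integral_pow_mul_log_sq {m : ℕ} (hm : m ≠ 0) :
    ∫ x in (0 : ℝ)..1, x ^ m * Real.log x ^ 2 = 2 / ((m : ℝ) + 1) ^ 3 := by
  set c : ℝ := m + 1
  have hc : c ≠ 0 := by positivity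
  let F : ℝ → ℝ := fun x =>
    x ^ (m + 1) * Real.log x ^ 2 / c - 2 * (x ^ (m + 1) * Real.log x) / c ^ 2
      + 2 * x ^ (m + 1) / c ^ 3
  have hF_cont : ContinuousOn F (Icc 0 1) := by
    have h (j : ℕ) := (continuousOn_pow_mul_log_pow m.succ_ne_zero j).mono
      (Icc_subset_Ici_self : Icc (0 : ℝ) 1 ⊆ Ici 0)
    have h2 := h 2
    have h1 : ContinuousOn (fun x => x ^ (m + 1) * Real.log x) (Icc 0 1) := by simpa using h 1
    fun_prop
  have hF_deriv : ∀ x ∈ Ioo (0 : ℝ) 1, HasDerivAt F (x ^ m * Real.log x ^ 2) x := by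
    intro x hx
    have hp : HasDerivAt (fun x : ℝ => x ^ (m + 1)) (c * x ^ m) x := by
      simpa [c] using hasDerivAt_pow (m + 1) x
    have hl := hasDerivAt_log hx.1.ne'
    refine ((((hp.fun_mul (hl.fun_pow 2)).div_const c).fun_sub
      (((hp.fun_mul hl).const_mul 2).div_const (c ^ 2))).fun_add
      ((hp.const_mul 2).div_const (c ^ 3))).congr_deriv ?_
    have hx0 : x ≠ 0 := hx.1.ne'
    field_simp
    ring
  rw [intervalIntegral.integral_eq_sub_of_hasDerivAt_of_le zero_le_one hF_cont hF_deriv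
    (((continuousOn_pow_mul_log_pow hm 2).mono Icc_subset_Ici_self).intervalIntegrable_of_Icc
      zero_le_one)]
  simp [F]

lemma hasSum_succ_mul_pow_mul_log_sq {x : ℝ} (hx : |x| < 1) :
    HasSum (fun n : ℕ => (n + 1) * (x ^ (2 * n + 1) * Real.log x ^ 2))
      (x * Real.log x ^ 2 / (1 - x ^ 2) ^ 2) := by
  have hx2 : ‖x ^ 2‖ < 1 := by simpa [sq_abs] using pow_lt_one₀ (abs_nonneg x) hx two_ne_zero
  have h := hasSum_choose_mul_geometric_of_norm_lt_one 1 hx2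
  simp only [Nat.choose_one_right, Nat.cast_add, Nat.cast_one] at h
  have h' := h.mul_left (x * Real.log x ^ 2)
  rw [show x * Real.log x ^ 2 * (1 / (1 - x ^ 2) ^ (1 + 1)) =
    x * Real.log x ^ 2 / (1 - x ^ 2) ^ 2 by ring] at h'
  exact h'.congr_fun fun n => by ring

lemma hasSum_inv_four_mul_succ_sq :
    HasSum (fun n : ℕ => 1 / (4 * ((n : ℝ) + 1) ^ 2)) (π ^ 2 / 24) := by
  have h := ((hasSum_nat_add_iff' 1).mpr hasSum_zeta_two).mul_left (1 / 4)
  rw [show (1 / 4 : ℝ) * (π ^ 2 / 6 - ∑ i ∈ Finset.range 1, 1 / (i : ℝ) ^ 2) = π ^ 2 / 24 by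
    norm_num [Finset.sum_range_one]; ring] at h
  exact h.congr_fun fun n => by push_cast; field_simp

lemma integral_succ_mul_pow_mul_log_sq (n : ℕ) :
    ∫ x in Ioo (0 : ℝ) 1, ((n : ℝ) + 1) * (x ^ (2 * n + 1) * Real.log x ^ 2) =
      1 / (4 * ((n : ℝ) + 1) ^ 2) := by
  rw [integral_const_mul, ← integral_Ioc_eq_integral_Ioo,
    ← intervalIntegral.integral_of_le zero_le_one,
    integral_pow_mul_log_sq (2 * n).succ_ne_zero]
  field_simp
  push_cast
  ring

lemma integral_mul_log_sq_div_one_sub_sq_sq :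
    ∫ x in Ioo (0 : ℝ) 1, x * Real.log x ^ 2 / (1 - x ^ 2) ^ 2 = π ^ 2 / 24 := by
  set F : ℕ → ℝ → ℝ := fun n x => ((n : ℝ) + 1) * (x ^ (2 * n + 1) * Real.log x ^ 2)
  have hF_int (n : ℕ) : IntegrableOn (F n) (Ioo 0 1) :=
    ((((continuousOn_pow_mul_log_pow (2 * n).succ_ne_zero 2).mono Icc_subset_Ici_self
      ).integrableOn_Icc).mono_set Ioo_subset_Icc_self).const_mul _
  have hF_norm (n : ℕ) : ∫ x in Ioo 0 1, ‖F n x‖ = ∫ x in Ioo 0 1, F n x :=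
    setIntegral_congr_fun measurableSet_Ioo fun x hx => by
      have := hx.1.le
      exact Real.norm_of_nonneg (by positivity)
  have hF_sum : ∀ x ∈ Ioo (0 : ℝ) 1, ∑' n, F n x = x * Real.log x ^ 2 / (1 - x ^ 2) ^ 2 :=
    fun x hx => (hasSum_succ_mul_pow_mul_log_sq
      (abs_lt.mpr ⟨by linarith [hx.1], hx.2⟩)).tsum_eq
  have h := hasSum_integral_of_summable_integral_norm hF_int
    (by simpa only [hF_norm, F, integral_succ_mul_pow_mul_log_sq]
      using hasSum_inv_four_mul_succ_sq.summable)
  simp only [F, integral_succ_mul_pow_mul_log_sq] at h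
  rw [setIntegral_congr_fun measurableSet_Ioo hF_sum] at h
  exact h.unique hasSum_inv_four_mul_succ_sq

theorem integral_log_pd_sq (z : ℂ) (hz : ‖z‖ < 1) :
    (1 / Real.pi) *
      ∫ w in {w : ℂ | ‖w‖ < 1},
        (Real.log (1 / pd z w)) ^ 2 * (1 - ‖w‖ ^ 2)⁻¹ ^ 2 =
      Real.pi ^ 2 / 12 := by
  have hdisk : {w : ℂ | ‖w‖ < 1} = ball 0 1 := by ext; simp
  have hradial : ∫ r in Ioo (0 : ℝ) 1, r • (Real.log (1 / r) ^ 2 * (1 - r ^ 2)⁻¹ ^ 2) =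
      ∫ r in Ioo (0 : ℝ) 1, r * Real.log r ^ 2 / (1 - r ^ 2) ^ 2 :=
    setIntegral_congr_fun measurableSet_Ioo fun r _ => by
      rw [smul_eq_mul, one_div, Real.log_inv, neg_sq, div_eq_mul_inv, ← inv_pow, mul_assoc]
  simp_rw [hdisk, pd_eq_norm_diskInvolution]
  rw [setIntegral_ball_comp_diskInvolution_mul hz (fun u => Real.log (1 / ‖u‖) ^ 2),
    setIntegral_ball_zero_comp_norm (fun r => Real.log (1 / r) ^ 2 * (1 - r ^ 2)⁻¹ ^ 2),
    smul_eq_mul, hradial, integral_mul_log_sq_div_one_sub_sq_sq]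
  field_simp
  ring
end

section
/- For a ∈ ℂ, ∫₀^{2π} log|1 - a·e^{iθ}| dθ equals 0 if |a| ≤ 1 and equals 2π·log|a| if |a| > 1. -/
/-!
On the unit circle `‖1 - a z⁻¹‖ = ‖z - a‖`, and inversion preserves circle averages, so the
integral is `2π` times the circle average of `log ‖· - a‖` over the unit circle. That average is
`log⁺ ‖a‖`: by the mean value property of the harmonic functions `log ‖z - a‖` (for `‖a‖ > 1`) and
`log ‖1 - a z‖` (for `‖a‖ < 1`), and for `‖a‖ = 1` by `∫₀^π log (sin x) dx = -π log 2`.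
-/

open Complex intervalIntegral Real

theorem circleAverage_log_norm_one_sub_mul (a : ℂ) :
    circleAverage (fun z ↦ Real.log ‖1 - a * z‖) 0 1 = log⁺ ‖a‖ := by
  rw [← circleAverage_zero_one_congr_inv, ← circleAverage_log_norm_sub_const_eq_posLog]
  refine circleAverage_congr_sphere fun z hz ↦ ?_
  rw [abs_one, mem_sphere_zero_iff_norm] at hz
  have hz0 : z ≠ 0 := by rintro rfl; simp at hz
  congr 1
  calc ‖1 - a * z⁻¹‖ = ‖z‖ * ‖1 - a * z⁻¹‖ := by rw [hz, one_mul]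
    _ = ‖z - a‖ := by rw [← norm_mul]; congr 1; field_simp

theorem integral_log_norm_one_sub_mul_exp (a : ℂ) :
    ∫ θ in (0:ℝ)..(2 * π), Real.log ‖1 - a * exp (θ * I)‖ = 2 * π * log⁺ ‖a‖ := by
  have h := circleAverage_log_norm_one_sub_mul a
  rw [circleAverage_def, smul_eq_mul, inv_mul_eq_iff_eq_mul₀ (by positivity)] at h
  simpa [circleMap_zero] using h

theorem integral_log_abs_one_sub (a : ℂ) :
    (‖a‖ ≤ 1 →
      ∫ θ in (0:ℝ)..(2 * Real.pi),
        Real.log (‖1 - a * Complex.exp (θ * Complex.I)‖) = 0) ∧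
    (1 < ‖a‖ →
      ∫ θ in (0:ℝ)..(2 * Real.pi),
        Real.log (‖1 - a * Complex.exp (θ * Complex.I)‖) =
        2 * Real.pi * Real.log (‖a‖)) := by
  rw [integral_log_norm_one_sub_mul_exp]
  refine ⟨fun ha ↦ ?_, fun ha ↦ ?_⟩
  · rw [(posLog_eq_zero_iff _).2 (by rwa [abs_norm]), mul_zero]
  · rw [posLog_eq_log (by rw [abs_norm]; exact ha.le)]
end
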